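/- Let θ₀ satisfy 0 < θ₀ < π, let S = {ξ ∈ ℂ : ξ ≠ 0 and |arg ξ| < θ₀}, let q : ℂ → ℂ be holomorphic on S, real-valued on (0,∞), with |q(ξ)| ≤ k(1+|ξ|)^(−γ) on S for some constants γ > 1, k > 0. Let α ∈ [0, π). For each z ∈ S with Im z < 0 define uₙ(·,z), vₙ(·,z) by u₀ ≡ 1, v₀ ≡ 0 and, for n ≥ 1, uₙ(ξ,z) = (i/(2z²)) ∫₀^∞ q(ξ+s/z)·(uₙ₋₁+vₙ₋₁)(ξ+s/z,z) ds and vₙ(ξ,z) = −(i/(2z²)) ∫₀^∞ q(ξ+s/z)·e^{2is}·(uₙ₋₁+vₙ₋₁)(ξ+s/z,z) ds, and set Ψ(z) = (cos α + i z sin α)·(1 + Σ_{n=1}^∞ (uₙ(0,z) + Z·vₙ(0,z))) with Z = (cos α − i z sin α)/(cos α + i z sin α). Then there exist real numbers R₁ > 0 and θ₁ with 0 < θ₁ < θ₀ such that Ψ(z) ≠ 0 for every z with |z| ≥ R₁ and −θ₁ < arg z < 0. -/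

import Mathlib

open Complex MeasureTheory Real Set Filter Topology

/-! For `-θ₁ < arg z < 0` the rays `s ↦ ξ + s / z` (`s > 0`) starting in `D` stay in `D` and leave
the imaginary axis at speed `re (1 / z) ≥ cos θ₁ / ‖z‖`, so along them
`‖q‖ ≤ k (1 + s cos θ₁ / ‖z‖) ^ (-γ)`, whose integral over `s > 0` is `‖z‖ / ((γ - 1) cos θ₁)`.
With the prefactor `1 / (2 z²)` this gives `‖uₙ‖, ‖vₙ‖ ≤ rⁿ` for `r = k / ((γ - 1) cos θ₁ ‖z‖)`.
For `‖z‖` large, `r < 1/4` and the Möbius factor `Z` has modulus at most `2`, so the series in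
`Ψ` has modulus `< 1`, and the prefactor `cos α + i z sin α` does not vanish. -/

def sector (θ : ℝ) : Set ℂ := {ξ | ξ ≠ 0 ∧ |ξ.arg| < θ}

def rightHalfSector (θ : ℝ) : Set ℂ := {ξ | 0 ≤ ξ.re ∧ (ξ ∈ sector θ ∨ ξ = 0)}

section Sector

variable {w : ℂ} {θ : ℝ}

theorem norm_mul_cos_le_re (h : |w.arg| ≤ θ) (hθ : θ ≤ π) : ‖w‖ * Real.cos θ ≤ w.re := by
  calc ‖w‖ * Real.cos θ ≤ ‖w‖ * Real.cos |w.arg| := by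
        gcongr; exact cos_le_cos_of_nonneg_of_le_pi (abs_nonneg _) hθ h
    _ = w.re := by rw [cos_abs, norm_mul_cos_arg]

theorem norm_mul_cos_lt_re (hw : w ≠ 0) (h : |w.arg| < θ) (hθ : θ ≤ π) :
    ‖w‖ * Real.cos θ < w.re := by
  have : 0 < ‖w‖ := norm_pos_iff.2 hw
  calc ‖w‖ * Real.cos θ < ‖w‖ * Real.cos |w.arg| := by
        gcongr; exact cos_lt_cos_of_nonneg_of_le_pi (abs_nonneg _) hθ h
    _ = w.re := by rw [cos_abs, norm_mul_cos_arg]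

theorem abs_arg_lt_of_norm_mul_cos_lt_re (hθ : 0 ≤ θ) (h : ‖w‖ * Real.cos θ < w.re) :
    |w.arg| < θ := by
  by_contra! hle
  have : Real.cos |w.arg| ≤ Real.cos θ := cos_le_cos_of_nonneg_of_le_pi hθ (abs_arg_le_pi w) hle
  rw [cos_abs] at this
  have := mul_le_mul_of_nonneg_left this (norm_nonneg w)
  rw [norm_mul_cos_arg] at this
  linarith

theorem norm_add_mul_lt_re_add {ξ η : ℂ} {c : ℝ} (hc : 0 ≤ c) (hξ : ‖ξ‖ * c ≤ ξ.re)
    (hη : ‖η‖ * c < η.re) : ‖ξ + η‖ * c < (ξ + η).re := by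
  calc ‖ξ + η‖ * c ≤ (‖ξ‖ + ‖η‖) * c := by gcongr; exact norm_add_le ξ η
    _ < (ξ + η).re := by rw [add_re]; linarith

end Sector

section Ray

variable {θ₀ θ₁ γ k s : ℝ} {z ξ : ℂ}

theorem add_ofReal_div_mem_sector (hθ₁ : θ₁ ≤ min θ₀ (π / 2)) (hz : z ≠ 0) (hzarg : |z.arg| < θ₁)
    (hs : 0 < s) (hξ : ξ ∈ rightHalfSector θ₀) :
    ξ + s / z ∈ sector θ₀ ∧ Real.cos θ₁ / ‖z‖ * s < (ξ + s / z).re := by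
  set θ := min θ₀ (π / 2)
  have hθπ : θ ≤ π := (min_le_right _ _).trans (by linarith [pi_pos])
  have hθ₁0 : 0 ≤ θ₁ := (abs_nonneg _).trans hzarg.le
  have hzpos : 0 < ‖z‖ := norm_pos_iff.2 hz
  have hη : Real.cos θ₁ / ‖z‖ * s < ((s : ℂ) / z).re := by
    have hre : ((s : ℂ) / z).re = s * z.re / ‖z‖ ^ 2 := by
      simp [div_re, normSq_eq_norm_sq, mul_div_assoc]
    have := norm_mul_cos_lt_re hz hzarg (hθ₁.trans hθπ)
    rw [hre, div_mul_eq_mul_div, div_lt_div_iff₀ hzpos (by positivity)]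
    nlinarith [mul_lt_mul_of_pos_left this (mul_pos hs hzpos)]
  obtain ⟨hξre, hξ⟩ := hξ
  have hξθ : ‖ξ‖ * Real.cos θ ≤ ξ.re := by
    rcases hξ with ⟨-, hξarg⟩ | rfl
    · exact norm_mul_cos_le_re (le_min hξarg.le (abs_arg_le_pi_div_two_iff.2 hξre)) hθπ
    · simp
  have hηθ : ‖(s : ℂ) / z‖ * Real.cos θ < ((s : ℂ) / z).re := by
    calc ‖(s : ℂ) / z‖ * Real.cos θ = Real.cos θ / ‖z‖ * s := by
          rw [norm_div, norm_real, norm_of_nonneg hs.le]; ring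
      _ ≤ Real.cos θ₁ / ‖z‖ * s := by
          gcongr; exact cos_le_cos_of_nonneg_of_le_pi hθ₁0 hθπ hθ₁
      _ < _ := hη
  have hsum := norm_add_mul_lt_re_add
    (cos_nonneg_of_mem_Icc ⟨by linarith [pi_pos], min_le_right _ _⟩) hξθ hηθ
  refine ⟨⟨fun h => by simp [h] at hsum, ?_⟩, hη.trans_le (by simpa using hξre)⟩
  exact (abs_arg_lt_of_norm_mul_cos_lt_re (hθ₁0.trans hθ₁) hsum).trans_le (min_le_left _ _)

theorem cos_div_norm_mul_nonneg (hθ₁ : θ₁ ≤ min θ₀ (π / 2)) (hzarg : |z.arg| < θ₁) (hs : 0 < s) :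
    0 ≤ Real.cos θ₁ / ‖z‖ * s := by
  have : 0 ≤ Real.cos θ₁ := cos_nonneg_of_mem_Icc
    ⟨by linarith [pi_pos, abs_nonneg z.arg], hθ₁.trans (min_le_right _ _)⟩
  positivity

theorem add_ofReal_div_mem_rightHalfSector (hθ₁ : θ₁ ≤ min θ₀ (π / 2)) (hz : z ≠ 0)
    (hzarg : |z.arg| < θ₁) (hs : 0 < s) (hξ : ξ ∈ rightHalfSector θ₀) :
    ξ + s / z ∈ rightHalfSector θ₀ :=
  have h := add_ofReal_div_mem_sector hθ₁ hz hzarg hs hξ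
  ⟨(cos_div_norm_mul_nonneg hθ₁ hzarg hs).trans h.2.le, Or.inl h.1⟩

theorem norm_comp_add_ofReal_div_le {q : ℂ → ℂ}
    (hq : ∀ w ∈ sector θ₀, ‖q w‖ ≤ k * (1 + ‖w‖) ^ (-γ)) (hk : 0 ≤ k) (hγ : 0 ≤ γ)
    (hθ₁ : θ₁ ≤ min θ₀ (π / 2)) (hz : z ≠ 0) (hzarg : |z.arg| < θ₁) (hs : 0 < s)
    (hξ : ξ ∈ rightHalfSector θ₀) :
    ‖q (ξ + s / z)‖ ≤ k * (1 + Real.cos θ₁ / ‖z‖ * s) ^ (-γ) := by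
  obtain ⟨hmem, hre⟩ := add_ofReal_div_mem_sector hθ₁ hz hzarg hs hξ
  have := cos_div_norm_mul_nonneg hθ₁ hzarg hs
  refine (hq _ hmem).trans (mul_le_mul_of_nonneg_left ?_ hk)
  exact rpow_le_rpow_of_nonpos (by linarith) (by linarith [re_le_norm (ξ + s / z)]) (by linarith)

end Ray

theorem hasDerivAt_one_add_mul_rpow_div {a γ s : ℝ} (ha : 0 < a) (hγ : γ ≠ 1) (hs : 0 ≤ s) :
    HasDerivAt (fun t : ℝ => (1 + a * t) ^ (1 - γ) / (a * (1 - γ))) ((1 + a * s) ^ (-γ)) s := by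
  have hpos : 0 < 1 + a * s := by positivity
  have h := (((hasDerivAt_id' s).const_mul a).const_add 1).rpow_const (p := 1 - γ) (Or.inl hpos.ne')
  refine (h.div_const (a * (1 - γ))).congr_deriv ?_
  field_simp [sub_ne_zero.2 hγ.symm]
  ring_nf

theorem tendsto_one_add_mul_rpow_div {a γ : ℝ} (ha : 0 < a) (hγ : 1 < γ) :
    Tendsto (fun t : ℝ => (1 + a * t) ^ (1 - γ) / (a * (1 - γ))) atTop (𝓝 0) := by
  have h : Tendsto (fun t : ℝ => 1 + a * t) atTop atTop :=
    tendsto_atTop_add_const_left _ 1 (tendsto_id.const_mul_atTop ha)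
  simpa using ((tendsto_rpow_neg_atTop (by linarith : 0 < γ - 1)).comp h).div_const (a * (1 - γ))

theorem integrableOn_Ioi_one_add_mul_rpow_neg {a γ : ℝ} (ha : 0 < a) (hγ : 1 < γ) :
    IntegrableOn (fun s : ℝ => (1 + a * s) ^ (-γ)) (Ioi 0) :=
  integrableOn_Ioi_deriv_of_nonneg' (fun _ hs => hasDerivAt_one_add_mul_rpow_div ha hγ.ne' hs)
    (fun s hs => rpow_nonneg (by positivity [hs.out.le]) _) (tendsto_one_add_mul_rpow_div ha hγ)

theorem integral_Ioi_one_add_mul_rpow_neg {a γ : ℝ} (ha : 0 < a) (hγ : 1 < γ) :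
    ∫ s in Ioi (0 : ℝ), (1 + a * s) ^ (-γ) = 1 / (a * (γ - 1)) := by
  rw [integral_Ioi_of_hasDerivAt_of_nonneg' (fun _ hs => hasDerivAt_one_add_mul_rpow_div ha hγ.ne' hs)
    (fun s hs => rpow_nonneg (by positivity [hs.out.le]) _) (tendsto_one_add_mul_rpow_div ha hγ)]
  field_simp [show (1 : ℝ) - γ ≠ 0 by linarith, show γ - 1 ≠ 0 by linarith]
  simp

theorem norm_integral_Ioi_le_of_norm_le_one_add_mul_rpow {E : Type*} [NormedAddCommGroup E]
    [NormedSpace ℝ E] {f : ℝ → E} {a γ M : ℝ} (ha : 0 < a) (hγ : 1 < γ)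
    (hf : ∀ s : ℝ, 0 < s → ‖f s‖ ≤ M * (1 + a * s) ^ (-γ)) :
    ‖∫ s in Ioi (0 : ℝ), f s‖ ≤ M / (a * (γ - 1)) := by
  calc ‖∫ s in Ioi (0 : ℝ), f s‖ ≤ ∫ s in Ioi (0 : ℝ), ‖f s‖ := norm_integral_le_integral_norm _
    _ ≤ ∫ s in Ioi (0 : ℝ), M * (1 + a * s) ^ (-γ) :=
        integral_mono_of_nonneg (ae_of_all _ fun _ => norm_nonneg _)
          ((integrableOn_Ioi_one_add_mul_rpow_neg ha hγ).const_mul M)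
          ((ae_restrict_iff' measurableSet_Ioi).2 (ae_of_all _ hf))
    _ = M / (a * (γ - 1)) := by
        rw [integral_const_mul, integral_Ioi_one_add_mul_rpow_neg ha hγ, mul_one_div]

theorem norm_iterates_le_pow {D : Set ℂ} {z : ℂ} {q : ℂ → ℂ} {u v : ℕ → ℂ → ℂ} {a γ k : ℝ}
    (ha : 0 < a) (hγ : 1 < γ)
    (hD : ∀ ξ ∈ D, ∀ s : ℝ, 0 < s → ξ + s / z ∈ D)
    (hq : ∀ ξ ∈ D, ∀ s : ℝ, 0 < s → ‖q (ξ + s / z)‖ ≤ k * (1 + a * s) ^ (-γ))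
    (hu0 : ∀ ξ ∈ D, u 0 ξ = 1) (hv0 : ∀ ξ ∈ D, v 0 ξ = 0)
    (hu : ∀ n : ℕ, ∀ ξ ∈ D, u (n + 1) ξ = I / (2 * z ^ 2) *
      ∫ s in Ioi (0 : ℝ), q (ξ + s / z) * (u n (ξ + s / z) + v n (ξ + s / z)))
    (hv : ∀ n : ℕ, ∀ ξ ∈ D, v (n + 1) ξ = -(I / (2 * z ^ 2)) *
      ∫ s in Ioi (0 : ℝ), q (ξ + s / z) * exp (2 * I * s) * (u n (ξ + s / z) + v n (ξ + s / z)))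
    (n : ℕ) :
    ∀ ξ ∈ D, ‖u n ξ‖ ≤ (k / (a * (γ - 1) * ‖z‖ ^ 2)) ^ n ∧
      ‖v n ξ‖ ≤ (k / (a * (γ - 1) * ‖z‖ ^ 2)) ^ n := by
  set r := k / (a * (γ - 1) * ‖z‖ ^ 2)
  induction n with
  | zero => intro ξ hξ; simp [hu0 ξ hξ, hv0 ξ hξ]
  | succ n ih =>
    intro ξ hξ
    have hqφ : ∀ s : ℝ, 0 < s → ‖q (ξ + s / z)‖ * ‖u n (ξ + s / z) + v n (ξ + s / z)‖ ≤
        2 * k * r ^ n * (1 + a * s) ^ (-γ) := by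
      intro s hs
      obtain ⟨hun, hvn⟩ := ih _ (hD ξ hξ s hs)
      have hqs := hq ξ hξ s hs
      calc _ ≤ k * (1 + a * s) ^ (-γ) * (2 * r ^ n) :=
            mul_le_mul hqs ((norm_add_le _ _).trans (by linarith)) (norm_nonneg _)
              ((norm_nonneg _).trans hqs)
        _ = _ := by ring
    have step : ∀ (c : ℂ) (F : ℝ → ℂ), ‖c‖ = 1 / (2 * ‖z‖ ^ 2) →
        (∀ s : ℝ, 0 < s → ‖F s‖ ≤ 2 * k * r ^ n * (1 + a * s) ^ (-γ)) →
        ‖c * ∫ s in Ioi (0 : ℝ), F s‖ ≤ r ^ (n + 1) := by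
      intro c F hc hF
      rw [norm_mul, hc]
      calc _ ≤ 1 / (2 * ‖z‖ ^ 2) * (2 * k * r ^ n / (a * (γ - 1))) := by
            gcongr; exact norm_integral_Ioi_le_of_norm_le_one_add_mul_rpow ha hγ hF
        _ = r ^ n * r := by simp only [r, div_eq_mul_inv, mul_inv]; ring
        _ = r ^ (n + 1) := (pow_succ r n).symm
    constructor
    · rw [hu n ξ hξ]
      exact step _ _ (by simp) fun s hs => by rw [norm_mul]; exact hqφ s hs
    · rw [hv n ξ hξ]
      refine step _ _ (by simp) fun s hs => ?_
      have : ‖exp (2 * I * s)‖ = 1 := by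
        simpa [mul_comm, mul_left_comm] using norm_exp_ofReal_mul_I (2 * s)
      rw [norm_mul, norm_mul, this, mul_one]
      exact hqφ s hs

theorem one_add_tsum_ne_zero_of_norm_le_geometric {R : Type*} [NormedRing R] [NormOneClass R]
    {b : ℕ → R} {C r : ℝ} (hr : 0 ≤ r) (hCr : C * r + r < 1)
    (hb : ∀ n, ‖b n‖ ≤ C * r * r ^ n) : 1 + ∑' n, b n ≠ 0 := by
  have hr1 : r < 1 := by linarith [(norm_nonneg _).trans (hb 0), pow_zero r]
  have hsum := (hasSum_geometric_of_lt_one hr hr1).mul_left (C * r)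
  have hlt : ‖∑' n, b n‖ < 1 := by
    refine (tsum_of_norm_bounded hsum hb).trans_lt ?_
    rw [← div_eq_mul_inv, div_lt_one (by linarith)]
    linarith
  intro h
  rw [← neg_eq_of_add_eq_zero_right h, norm_neg, norm_one] at hlt
  exact lt_irrefl 1 hlt

theorem one_add_tsum_add_mul_ne_zero {R : Type*} [NormedRing R] [NormOneClass R]
    {u v : ℕ → R} {Z : R} {r : ℝ} (hr : 0 ≤ r) (hr4 : r < 1 / 4) (hZ : ‖Z‖ ≤ 2)
    (hu : ∀ n, ‖u n‖ ≤ r ^ n) (hv : ∀ n, ‖v n‖ ≤ r ^ n) :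
    1 + ∑' n, (u (n + 1) + Z * v (n + 1)) ≠ 0 := by
  refine one_add_tsum_ne_zero_of_norm_le_geometric (C := 3) hr (by linarith) fun n => ?_
  calc _ ≤ ‖u (n + 1)‖ + ‖Z‖ * ‖v (n + 1)‖ :=
        (norm_add_le _ _).trans (by gcongr; exact norm_mul_le _ _)
    _ ≤ r ^ (n + 1) + 2 * r ^ (n + 1) := by gcongr; exacts [hu _, hv _]
    _ = 3 * r * r ^ n := by ring

-- For `s = 0` the hypothesis is vacuous (`3 / 0 = 0`), and then the ratio is `1`.
theorem ofReal_add_I_mul_ne_zero_and_norm_div_le_two {c s : ℝ} (hcs : c ^ 2 + s ^ 2 = 1) {w : ℂ}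
    (hw : 3 / |s| ≤ ‖w‖) :
    (c : ℂ) + I * w * s ≠ 0 ∧ ‖((c : ℂ) - I * w * s) / ((c : ℂ) + I * w * s)‖ ≤ 2 := by
  rcases eq_or_ne s 0 with rfl | hs
  · have hc : c ≠ 0 := by rintro rfl; norm_num at hcs
    simp [hc]
  have ht : 3 ≤ ‖w‖ * |s| := by rwa [div_le_iff₀ (abs_pos.2 hs)] at hw
  have hIw : ‖I * w * s‖ = ‖w‖ * |s| := by simp
  have hc : ‖(c : ℂ)‖ ≤ 1 := by
    rw [norm_real, norm_eq_abs, ← sq_le_one_iff_abs_le_one]; nlinarith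
  have hden : ‖w‖ * |s| - 1 ≤ ‖(c : ℂ) + I * w * s‖ := by
    have := norm_sub_norm_le (I * w * s) (-(c : ℂ))
    rw [hIw, norm_neg, sub_neg_eq_add, add_comm] at this
    linarith
  have hnum : ‖(c : ℂ) - I * w * s‖ ≤ 1 + ‖w‖ * |s| :=
    (norm_sub_le _ _).trans (by rw [hIw]; linarith)
  have hpos : 0 < ‖(c : ℂ) + I * w * s‖ := by linarith
  refine ⟨norm_pos_iff.1 hpos, ?_⟩
  rw [norm_div, div_le_iff₀ hpos]
  linarith

theorem stmt_10_general
    (θ₀ γ k : ℝ) (hθ₀ : 0 < θ₀)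
    (S : Set ℂ) (hS : S = {ξ : ℂ | ξ ≠ 0 ∧ |ξ.arg| < θ₀})
    (q : ℂ → ℂ)
    (hγ : 1 < γ) (hk : 0 < k)
    (hqbound : ∀ ξ ∈ S, ‖q ξ‖ ≤ k * (1 + ‖ξ‖) ^ (-γ))
    (α : ℝ)
    (D : Set ℂ) (hD : D = {ξ : ℂ | 0 ≤ ξ.re ∧ (ξ ∈ S ∨ ξ = 0)})
    (u v : ℕ → ℂ → ℂ → ℂ)
    (hu0 : ∀ z ∈ S, z.im < 0 → ∀ ξ ∈ D, u 0 ξ z = 1)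
    (hv0 : ∀ z ∈ S, z.im < 0 → ∀ ξ ∈ D, v 0 ξ z = 0)
    (hu : ∀ z ∈ S, z.im < 0 → ∀ n : ℕ, ∀ ξ ∈ D, u (n + 1) ξ z =
      (Complex.I / (2 * z ^ 2)) *
        ∫ s in Ioi (0 : ℝ), q (ξ + s / z) *
          (u n (ξ + s / z) z + v n (ξ + s / z) z))
    (hv : ∀ z ∈ S, z.im < 0 → ∀ n : ℕ, ∀ ξ ∈ D, v (n + 1) ξ z =
      -(Complex.I / (2 * z ^ 2)) *
        ∫ s in Ioi (0 : ℝ), q (ξ + s / z) * Complex.exp (2 * Complex.I * s) *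
          (u n (ξ + s / z) z + v n (ξ + s / z) z))
    (Ψ : ℂ → ℂ)
    (hΨ : ∀ z : ℂ, Ψ z =
      ((Real.cos α : ℂ) + Complex.I * z * (Real.sin α : ℂ)) *
        (1 + ∑' n : ℕ, (u (n + 1) 0 z +
          (((Real.cos α : ℂ) - Complex.I * z * (Real.sin α : ℂ)) /
            ((Real.cos α : ℂ) + Complex.I * z * (Real.sin α : ℂ))) * v (n + 1) 0 z))) :
    ∃ R₁ θ₁ : ℝ, 0 < R₁ ∧ 0 < θ₁ ∧ θ₁ < θ₀ ∧
      ∀ z : ℂ, R₁ ≤ ‖z‖ → -θ₁ < z.arg → z.arg < 0 → Ψ z ≠ 0 := by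
  change S = sector θ₀ at hS
  subst hS
  change D = rightHalfSector θ₀ at hD
  subst hD
  obtain ⟨θ₁, hθ₁0, hθ₁⟩ : ∃ θ₁, 0 < θ₁ ∧ θ₁ < min θ₀ (π / 2) :=
    ⟨min θ₀ (π / 2) / 2, by positivity, half_lt_self (lt_min hθ₀ (by positivity))⟩
  have hcos : 0 < Real.cos θ₁ :=
    cos_pos_of_mem_Ioo ⟨by linarith [pi_pos], hθ₁.trans_le (min_le_right _ _)⟩
  set K := k / ((γ - 1) * Real.cos θ₁) with hK_def
  have hK : 0 < K := div_pos hk (mul_pos (by linarith) hcos)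
  refine ⟨max (4 * K + 1) (3 / |Real.sin α|), θ₁, by positivity, hθ₁0,
    hθ₁.trans_le (min_le_left _ _), fun z hz hargl hargr => ?_⟩
  have hz0 : z ≠ 0 := by rintro rfl; simp at hargr
  have hzpos : 0 < ‖z‖ := norm_pos_iff.2 hz0
  have hzarg : |z.arg| < θ₁ := abs_lt.2 ⟨hargl, hargr.trans hθ₁0⟩
  have hzS : z ∈ sector θ₀ := ⟨hz0, hzarg.trans (hθ₁.trans_le (min_le_left _ _))⟩
  have hzim : z.im < 0 := arg_neg_iff.1 hargr
  have hbound := norm_iterates_le_pow (u := fun n ξ => u n ξ z) (v := fun n ξ => v n ξ z)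
    (div_pos hcos hzpos) hγ
    (fun _ hξ _ hs => add_ofReal_div_mem_rightHalfSector hθ₁.le hz0 hzarg hs hξ)
    (fun _ hξ _ hs =>
      norm_comp_add_ofReal_div_le hqbound hk.le (by linarith) hθ₁.le hz0 hzarg hs hξ)
    (hu0 z hzS hzim) (hv0 z hzS hzim) (hu z hzS hzim) (hv z hzS hzim)
  have hr : k / (Real.cos θ₁ / ‖z‖ * (γ - 1) * ‖z‖ ^ 2) = K / ‖z‖ := by
    rw [hK_def]; field_simp
  rw [hr] at hbound
  have hr4 : K / ‖z‖ < 1 / 4 := by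
    rw [div_lt_iff₀ hzpos]; linarith [le_max_left (4 * K + 1) (3 / |Real.sin α|)]
  obtain ⟨hd, hZ⟩ := ofReal_add_I_mul_ne_zero_and_norm_div_le_two (cos_sq_add_sin_sq α)
    ((le_max_right _ _).trans hz)
  have h0 : (0 : ℂ) ∈ rightHalfSector θ₀ := ⟨le_rfl, Or.inr rfl⟩
  rw [hΨ]
  exact mul_ne_zero hd (one_add_tsum_add_mul_ne_zero (by positivity) hr4 hZ
    (fun n => (hbound n 0 h0).1) (fun n => (hbound n 0 h0).2))

/-- Corollary 3.2: there is a resonance-free sectorial region `|z| ≥ R₁`,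
`−θ₁ < arg z < 0` in the unphysical sheet, i.e. the analytically continued
boundary function `Ψ(z)` has no zeros there. -/
theorem stmt_10
    (θ₀ γ k : ℝ) (hθ₀ : 0 < θ₀) (hθ₀' : θ₀ < π)
    (S : Set ℂ) (hS : S = {ξ : ℂ | ξ ≠ 0 ∧ |ξ.arg| < θ₀})
    (q : ℂ → ℂ) (hq : DifferentiableOn ℂ q S)
    (hqreal : ∀ x : ℝ, 0 < x → (q x).im = 0)
    (hγ : 1 < γ) (hk : 0 < k)
    (hqbound : ∀ ξ ∈ S, ‖q ξ‖ ≤ k * (1 + ‖ξ‖) ^ (-γ))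
    (α : ℝ) (hα0 : 0 ≤ α) (hαπ : α < π)
    (D : Set ℂ) (hD : D = {ξ : ℂ | 0 ≤ ξ.re ∧ (ξ ∈ S ∨ ξ = 0)})
    (u v : ℕ → ℂ → ℂ → ℂ)
    (hu0 : ∀ z ∈ S, z.im < 0 → ∀ ξ ∈ D, u 0 ξ z = 1)
    (hv0 : ∀ z ∈ S, z.im < 0 → ∀ ξ ∈ D, v 0 ξ z = 0)
    (hu : ∀ z ∈ S, z.im < 0 → ∀ n : ℕ, ∀ ξ ∈ D, u (n + 1) ξ z =
      (Complex.I / (2 * z ^ 2)) *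
        ∫ s in Ioi (0 : ℝ), q (ξ + s / z) *
          (u n (ξ + s / z) z + v n (ξ + s / z) z))
    (hv : ∀ z ∈ S, z.im < 0 → ∀ n : ℕ, ∀ ξ ∈ D, v (n + 1) ξ z =
      -(Complex.I / (2 * z ^ 2)) *
        ∫ s in Ioi (0 : ℝ), q (ξ + s / z) * Complex.exp (2 * Complex.I * s) *
          (u n (ξ + s / z) z + v n (ξ + s / z) z))
    (Ψ : ℂ → ℂ)
    (hΨ : ∀ z : ℂ, Ψ z =
      ((Real.cos α : ℂ) + Complex.I * z * (Real.sin α : ℂ)) *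
        (1 + ∑' n : ℕ, (u (n + 1) 0 z +
          (((Real.cos α : ℂ) - Complex.I * z * (Real.sin α : ℂ)) /
            ((Real.cos α : ℂ) + Complex.I * z * (Real.sin α : ℂ))) * v (n + 1) 0 z))) :
    ∃ R₁ θ₁ : ℝ, 0 < R₁ ∧ 0 < θ₁ ∧ θ₁ < θ₀ ∧
      ∀ z : ℂ, R₁ ≤ ‖z‖ → -θ₁ < z.arg → z.arg < 0 → Ψ z ≠ 0 :=
  stmt_10_general θ₀ γ k hθ₀ S hS q hγ hk hqbound α D hD u v hu0 hv0 hu hv Ψ hΨ
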